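/- arXiv:1408.1429 — 7 statements merged into one kernel-verified Lean document; each statement's English description precedes it below -/
import Mathlib

section
/- Let f and g be two vectors in ℝ^E indexed by a finite edge set E, and let each l_e : ℝ → ℝ satisfy the inverse-K-continuity condition: (x − y)(l_e(x) − l_e(y)) ≤ ε²/K implies |x − y| ≤ ε for all x, y, ε ≥ 0. Suppose Σ_e (g_e − f_e)·l_e(g_e) ≤ δ and Σ_e (f_e − g_e)·l_e(f_e) ≤ 0, with f_e, g_e ≥ 0 and each l_e monotone increasing. Then for every edge e, |g_e − f_e| ≤ √(K·δ). -/
/-!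
Adding the two variational inequalities gives `∑ e, (g e - f e) * (l e (g e) - l e (f e)) ≤ δ`.
Monotonicity of each `l e` makes every summand nonnegative, so each summand is itself at most `δ`,
and inverse-`K`-continuity with `ε = √(K δ)` turns that into `|g e - f e| ≤ √(K δ)`.
-/

/-- Inverse-`K`-continuity of a latency function on `ℝ≥0`. -/
def IsInverseContinuous (K : ℝ) (φ : ℝ → ℝ) : Prop :=
  ∀ x y ε : ℝ, 0 ≤ x → 0 ≤ y → 0 ≤ ε → (x - y) * (φ x - φ y) ≤ ε ^ 2 / K → |x - y| ≤ ε

theorem Monotone.sub_mul_sub_nonneg {φ : ℝ → ℝ} (hφ : Monotone φ) (x y : ℝ) :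
    0 ≤ (x - y) * (φ x - φ y) :=
  (monotone_id.monovary hφ).sub_mul_sub_nonneg y x

theorem IsInverseContinuous.abs_sub_le_sqrt {K δ x y : ℝ} {φ : ℝ → ℝ}
    (hφ : IsInverseContinuous K φ) (hK : 0 < K) (hx : 0 ≤ x) (hy : 0 ≤ y)
    (hxy : (x - y) * (φ x - φ y) ≤ δ) : |x - y| ≤ √(K * δ) := by
  refine hφ x y _ hx hy (Real.sqrt_nonneg _) (hxy.trans ?_)
  rw [Real.sq_sqrt', le_div_iff₀ hK, mul_comm]
  exact le_max_left _ _

theorem sum_sub_mul_sub_eq {E : Type*} [Fintype E] (f g : E → ℝ) (l : E → ℝ → ℝ) :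
    ∑ e, (g e - f e) * (l e (g e) - l e (f e)) =
      ∑ e, (g e - f e) * l e (g e) + ∑ e, (f e - g e) * l e (f e) := by
  rw [← Finset.sum_add_distrib]
  exact Finset.sum_congr rfl fun e _ ↦ by ring

theorem eqbm_close_abstract_general
    {E : Type*} [Fintype E] (f g : E → ℝ) (l : E → ℝ → ℝ)
    (K δ : ℝ) (hK : 0 < K)
    (hf : ∀ e, 0 ≤ f e) (hg : ∀ e, 0 ≤ g e)
    (hmono : ∀ e, Monotone (l e))
    (hinv : ∀ e, ∀ x y ε : ℝ, 0 ≤ x → 0 ≤ y → 0 ≤ ε →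
      (x - y) * (l e x - l e y) ≤ ε ^ 2 / K → |x - y| ≤ ε)
    (h1 : ∑ e, (g e - f e) * l e (g e) ≤ δ)
    (h2 : ∑ e, (f e - g e) * l e (f e) ≤ 0) :
    ∀ e, |g e - f e| ≤ Real.sqrt (K * δ) := by
  intro e
  have hsum : ∑ e, (g e - f e) * (l e (g e) - l e (f e)) ≤ δ := by
    rw [sum_sub_mul_sub_eq]
    linarith
  have hterm : (g e - f e) * (l e (g e) - l e (f e)) ≤ δ :=
    (Finset.single_le_sum (fun e _ ↦ (hmono e).sub_mul_sub_nonneg (g e) (f e))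
      (Finset.mem_univ e)).trans hsum
  exact IsInverseContinuous.abs_sub_le_sqrt (hinv e) hK (hg e) (hf e) hterm

/-- Abstract form of Lemma 3.4 (closeness of an approximate equilibrium to the
exact Wardrop equilibrium): if each `l e` is monotone increasing and
inverse-`K`-continuous, `Σ_e (g_e − f_e)·l_e(g_e) ≤ δ` and
`Σ_e (f_e − g_e)·l_e(f_e) ≤ 0`, then `|g_e − f_e| ≤ √(K·δ)` on every edge. -/
theorem eqbm_close_abstract
    {E : Type*} [Fintype E] (f g : E → ℝ) (l : E → ℝ → ℝ)
    (K δ : ℝ) (hK : 0 < K) (hδ : 0 < δ)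
    (hf : ∀ e, 0 ≤ f e) (hg : ∀ e, 0 ≤ g e)
    (hmono : ∀ e, Monotone (l e))
    (hinv : ∀ e, ∀ x y ε : ℝ, 0 ≤ x → 0 ≤ y → 0 ≤ ε →
      (x - y) * (l e x - l e y) ≤ ε ^ 2 / K → |x - y| ≤ ε)
    (h1 : ∑ e, (g e - f e) * l e (g e) ≤ δ)
    (h2 : ∑ e, (f e - g e) * l e (f e) ≤ 0) :
    ∀ e, |g e - f e| ≤ Real.sqrt (K * δ) :=
  eqbm_close_abstract_general f g l K δ hK hf hg hmono hinv h1 h2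
end

section
/- In a two-terminal series-parallel graph viewed via its binary decomposition tree, for any two s-t flows f and f̃ (nonnegative edge vectors satisfying flow conservation with the same source s and sink t): if there is no (f, f̃)-good pair of subgraphs, then (i) val(f) = val(f̃) implies f = f̃; (ii) val(f) > val(f̃) implies f_e ≥ f̃_e on every edge; (iii) val(f) < val(f̃) implies f_e ≤ f̃_e on every edge. -/
/-- Two-terminal series-parallel graphs, given by their binary decomposition tree. -/
inductive SPG : Type
  | edge : SPG
  | series : SPG → SPG → SPG
  | parallel : SPG → SPG → SPG

namespace SPG

/-- The edge set of a series-parallel graph (the leaves of the decomposition tree). -/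
def E : SPG → Type
  | .edge => Unit
  | .series a b => a.E ⊕ b.E
  | .parallel a b => a.E ⊕ b.E

/-- The value (between the two terminals) of an edge vector on a series-parallel graph. -/
def val : (G : SPG) → (G.E → ℝ) → ℝ
  | .edge, f => f ()
  | .series a _, f => a.val (f ∘ Sum.inl)
  | .parallel a b, f => a.val (f ∘ Sum.inl) + b.val (f ∘ Sum.inr)

/-- `f` is an `s`-`t` flow on the series-parallel graph `G`: it is nonnegative and
satisfies flow conservation (in a series join both parts carry the same value). -/
def IsFlow : (G : SPG) → (G.E → ℝ) → Prop
  | .edge, f => 0 ≤ f ()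
  | .series a b, f => a.IsFlow (f ∘ Sum.inl) ∧ b.IsFlow (f ∘ Sum.inr) ∧
      a.val (f ∘ Sum.inl) = b.val (f ∘ Sum.inr)
  | .parallel a b, f => a.IsFlow (f ∘ Sum.inl) ∧ b.IsFlow (f ∘ Sum.inr)

/-- There is an `(f, f̃)`-good pair of subgraphs of `G`: two subgraphs `H₁`, `H₂`
whose parallel join is a node of the decomposition tree, with `f ≥ f̃` edgewise on
`H₁`, `f ≤ f̃` edgewise on `H₂`, `val(f_{H₁}) > val(f̃_{H₁})` and
`val(f_{H₂}) < val(f̃_{H₂})`. -/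
def GoodPair : (G : SPG) → (G.E → ℝ) → (G.E → ℝ) → Prop
  | .edge, _, _ => False
  | .series a b, f, g =>
      a.GoodPair (f ∘ Sum.inl) (g ∘ Sum.inl) ∨ b.GoodPair (f ∘ Sum.inr) (g ∘ Sum.inr)
  | .parallel a b, f, g =>
      a.GoodPair (f ∘ Sum.inl) (g ∘ Sum.inl) ∨ b.GoodPair (f ∘ Sum.inr) (g ∘ Sum.inr) ∨
      ((∀ e, g (Sum.inl e) ≤ f (Sum.inl e)) ∧ (∀ e, f (Sum.inr e) ≤ g (Sum.inr e)) ∧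
        a.val (g ∘ Sum.inl) < a.val (f ∘ Sum.inl) ∧ b.val (f ∘ Sum.inr) < b.val (g ∘ Sum.inr)) ∨
      ((∀ e, g (Sum.inr e) ≤ f (Sum.inr e)) ∧ (∀ e, f (Sum.inl e) ≤ g (Sum.inl e)) ∧
        b.val (g ∘ Sum.inr) < b.val (f ∘ Sum.inr) ∧ a.val (f ∘ Sum.inl) < a.val (g ∘ Sum.inl))

end SPG

/-!
Comparing two flows on a series-parallel graph, "smaller value implies edgewise smaller"
propagates up the decomposition tree. In a series join both parts carry the value of the
whole. In a parallel join, if one part carried less of `f` than of `f̃` and the other more,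
the induction hypothesis would make those two parts an `(f, f̃)`-good pair; so both parts
compare like the whole.
-/

namespace SPG

theorem GoodPair.symm {G : SPG} {f g : G.E → ℝ} (h : G.GoodPair f g) : G.GoodPair g f := by
  induction G with
  | edge => exact h
  | series a b iha ihb => exact h.imp iha ihb
  | parallel a b iha ihb =>
    simp only [GoodPair] at h ⊢
    rcases h with h | h | ⟨hl, hr, hla, hrb⟩ | ⟨hr, hl, hrb, hla⟩
    · exact .inl (iha h)
    · exact .inr (.inl (ihb h))
    · exact .inr (.inr (.inr ⟨hr, hl, hrb, hla⟩))
    · exact .inr (.inr (.inl ⟨hl, hr, hla, hrb⟩))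

theorem le_of_val_le {G : SPG} {f g : G.E → ℝ} (hf : G.IsFlow f) (hg : G.IsFlow g)
    (hfg : ¬ G.GoodPair f g) (hv : G.val f ≤ G.val g) : f ≤ g := by
  induction G with
  | edge => exact fun _ => hv
  | series a b iha ihb =>
    obtain ⟨hfa, hfb, hf_val⟩ := hf
    obtain ⟨hga, hgb, hg_val⟩ := hg
    have hb : b.val (f ∘ Sum.inr) ≤ b.val (g ∘ Sum.inr) := hf_val ▸ hg_val ▸ hv
    exact Sum.forall.2 ⟨iha hfa hga (fun h => hfg (.inl h)) hv,
      ihb hfb hgb (fun h => hfg (.inr h)) hb⟩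
  | parallel a b iha ihb =>
    obtain ⟨hfa, hfb⟩ := hf
    obtain ⟨hga, hgb⟩ := hg
    have hna : ¬ a.GoodPair (f ∘ Sum.inl) (g ∘ Sum.inl) := fun h => hfg (.inl h)
    have hnb : ¬ b.GoodPair (f ∘ Sum.inr) (g ∘ Sum.inr) := fun h => hfg (.inr (.inl h))
    have hv_sum : a.val (f ∘ Sum.inl) + b.val (f ∘ Sum.inr)
        ≤ a.val (g ∘ Sum.inl) + b.val (g ∘ Sum.inr) := hv
    have ha : a.val (f ∘ Sum.inl) ≤ a.val (g ∘ Sum.inl) := by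
      by_contra! ha
      have hb : b.val (f ∘ Sum.inr) < b.val (g ∘ Sum.inr) := by linarith
      exact hfg (.inr (.inr (.inl
        ⟨iha hga hfa (fun h => hna h.symm) ha.le, ihb hfb hgb hnb hb.le, ha, hb⟩)))
    have hb : b.val (f ∘ Sum.inr) ≤ b.val (g ∘ Sum.inr) := by
      by_contra! hb
      have ha : a.val (f ∘ Sum.inl) < a.val (g ∘ Sum.inl) := by linarith
      exact hfg (.inr (.inr (.inr
        ⟨ihb hgb hfb (fun h => hnb h.symm) hb.le, iha hfa hga hna ha.le, hb, ha⟩)))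
    exact Sum.forall.2 ⟨iha hfa hga hna ha, ihb hfb hgb hnb hb⟩

end SPG

/-- Claim 4.3: trichotomy for `s`-`t` flows on a series-parallel graph. If there is
no `(f, f̃)`-good pair of subgraphs, then equal values force `f = f̃`, larger value
forces edgewise domination `f ≥ f̃`, and smaller value forces `f ≤ f̃`. -/
theorem spg_flow_trichotomy (G : SPG) (f ft : G.E → ℝ)
    (hf : G.IsFlow f) (hft : G.IsFlow ft) (hng : ¬ G.GoodPair f ft) :
    (G.val f = G.val ft → f = ft) ∧
    (G.val ft < G.val f → ∀ e, ft e ≤ f e) ∧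
    (G.val f < G.val ft → ∀ e, f e ≤ ft e) := by
  have hng' : ¬ G.GoodPair ft f := fun h => hng h.symm
  refine ⟨fun h => ?_, fun h => ?_, fun h => ?_⟩
  · exact le_antisymm (SPG.le_of_val_le hf hft hng h.le) (SPG.le_of_val_le hft hf hng' h.ge)
  · exact SPG.le_of_val_le hft hf hng' h.le
  · exact SPG.le_of_val_le hf hft hng h.le
end

section
/- In any two-terminal series-parallel graph G with source s and sink t, for any assignment of nonnegative edge costs (c_e), there exist nonnegative edge tolls (τ_e) such that every s-t path is a shortest s-t path under edge costs (c_e + τ_e), and the minimum of τ(P) over all s-t paths P equals 0. -/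
namespace SPG

/-- The `s`-`t` paths of a series-parallel graph. -/
def Path : SPG → Type
  | .edge => Unit
  | .series a b => a.Path × b.Path
  | .parallel a b => a.Path ⊕ b.Path

/-- The cost `c(P) = Σ_{e ∈ P} c_e` of a path under edge costs `c`. -/
def pathCost : (G : SPG) → (G.E → ℝ) → G.Path → ℝ
  | .edge, c, _ => c ()
  | .series a b, c, P => a.pathCost (c ∘ Sum.inl) P.1 + b.pathCost (c ∘ Sum.inr) P.2
  | .parallel a _, c, .inl P => a.pathCost (c ∘ Sum.inl) P
  | .parallel _ b, c, .inr P => b.pathCost (c ∘ Sum.inr) P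

/-- The minimum of `c(P)` over all `s`-`t` paths `P` of `G`. -/
def minPathCost : (G : SPG) → (G.E → ℝ) → ℝ
  | .edge, c => c ()
  | .series a b, c => a.minPathCost (c ∘ Sum.inl) + b.minPathCost (c ∘ Sum.inr)
  | .parallel a b, c => min (a.minPathCost (c ∘ Sum.inl)) (b.minPathCost (c ∘ Sum.inr))

/-- `e` is an edge leaving the source terminal of `G`. -/
def isSourceEdge : (G : SPG) → G.E → Prop
  | .edge, _ => True
  | .series a _, e => match e with
      | .inl e => a.isSourceEdge e
      | .inr _ => False
  | .parallel a b, e => match e with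
      | .inl e => a.isSourceEdge e
      | .inr e => b.isSourceEdge e

/-- Canonical tolls: for every subgraph `H` of the decomposition tree and every edge
`e` leaving the source terminal `s_H` of `H`, `α_e ≥ min_{P ∈ 𝒫(H)} α(P)`. -/
def Canonical : (G : SPG) → (G.E → ℝ) → Prop
  | .edge, _ => True
  | .series a b, τ =>
      (∀ e, a.isSourceEdge e →
        a.minPathCost (τ ∘ Sum.inl) + b.minPathCost (τ ∘ Sum.inr) ≤ τ (Sum.inl e)) ∧
      a.Canonical (τ ∘ Sum.inl) ∧ b.Canonical (τ ∘ Sum.inr)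
  | .parallel a b, τ =>
      (∀ e, a.isSourceEdge e →
        min (a.minPathCost (τ ∘ Sum.inl)) (b.minPathCost (τ ∘ Sum.inr)) ≤ τ (Sum.inl e)) ∧
      (∀ e, b.isSourceEdge e →
        min (a.minPathCost (τ ∘ Sum.inl)) (b.minPathCost (τ ∘ Sum.inr)) ≤ τ (Sum.inr e)) ∧
      a.Canonical (τ ∘ Sum.inl) ∧ b.Canonical (τ ∘ Sum.inr)

end SPG

/-!
Induct on the decomposition tree, carrying the common cost `C` of all paths under `c + τ`.
A series join adds the two tolls and the two common costs. For a parallel join, an `s`-`t`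
path leaves the source along exactly one edge, so adding `δ` to the tolls of the edges
leaving the source of a side raises all its path costs by `δ`; doing this on the cheaper side
with `δ` the difference of the common costs equalizes both sides, and the zero-toll path of
the dearer side is untouched.
-/

namespace SPG

lemma pathCost_add : ∀ (G : SPG) (f g : G.E → ℝ) (P : G.Path),
    G.pathCost (f + g) P = G.pathCost f P + G.pathCost g P
  | .edge, _, _, _ => rfl
  | .series a b, f, g, (P, Q) => by
      change a.pathCost (f ∘ Sum.inl + g ∘ Sum.inl) P + b.pathCost (f ∘ Sum.inr + g ∘ Sum.inr) Q
        = (a.pathCost _ P + b.pathCost _ Q) + (a.pathCost _ P + b.pathCost _ Q)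
      rw [pathCost_add a, pathCost_add b]
      ring
  | .parallel a _, f, g, .inl P => pathCost_add a _ _ P
  | .parallel _ b, f, g, .inr P => pathCost_add b _ _ P

lemma pathCost_zero : ∀ (G : SPG) (P : G.Path), G.pathCost 0 P = 0
  | .edge, _ => rfl
  | .series a b, (P, Q) => by
      change a.pathCost 0 P + b.pathCost 0 Q = 0
      rw [pathCost_zero a, pathCost_zero b, add_zero]
  | .parallel a _, .inl P => pathCost_zero a P
  | .parallel _ b, .inr P => pathCost_zero b P

noncomputable def sourceToll (G : SPG) (δ : ℝ) : G.E → ℝ :=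
  {e | G.isSourceEdge e}.indicator fun _ => δ

lemma sourceToll_nonneg (G : SPG) {δ : ℝ} (hδ : 0 ≤ δ) (e : G.E) : 0 ≤ G.sourceToll δ e :=
  Set.indicator_nonneg (fun _ _ => hδ) e

lemma pathCost_sourceToll : ∀ (G : SPG) (δ : ℝ) (P : G.Path), G.pathCost (G.sourceToll δ) P = δ
  | .edge, δ, () => Set.indicator_of_mem (s := {e : edge.E | edge.isSourceEdge e}) (a := ())
      trivial fun _ => δ
  | .series a b, δ, (P, Q) => by
      have hb : (series a b).sourceToll δ ∘ Sum.inr = 0 :=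
        funext fun e => Set.indicator_of_notMem (s := {e | (series a b).isSourceEdge e})
          (a := Sum.inr e) id fun _ => δ
      change a.pathCost (a.sourceToll δ) P + b.pathCost ((series a b).sourceToll δ ∘ Sum.inr) Q = δ
      rw [hb, pathCost_sourceToll a, pathCost_zero, add_zero]
  | .parallel a _, δ, .inl P => pathCost_sourceToll a δ P
  | .parallel _ b, δ, .inr P => pathCost_sourceToll b δ P

structure EqualizingToll (G : SPG) (c τ : G.E → ℝ) (C : ℝ) : Prop where
  nonneg : ∀ e, 0 ≤ τ e
  pathCost_eq : ∀ P, G.pathCost (c + τ) P = C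
  exists_pathCost_eq_zero : ∃ P, G.pathCost τ P = 0

lemma equalizingToll_edge (c : edge.E → ℝ) : EqualizingToll edge c 0 (c ()) :=
  ⟨fun _ => le_rfl, fun _ => add_zero _, ⟨(), rfl⟩⟩

lemma EqualizingToll.series {a b : SPG} {c : (series a b).E → ℝ} {τa τb Ca Cb}
    (ha : EqualizingToll a (c ∘ Sum.inl) τa Ca) (hb : EqualizingToll b (c ∘ Sum.inr) τb Cb) :
    EqualizingToll (series a b) c (Sum.elim τa τb) (Ca + Cb) where
  nonneg := Sum.rec ha.nonneg hb.nonneg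
  pathCost_eq P := congrArg₂ (· + ·) (ha.pathCost_eq P.1) (hb.pathCost_eq P.2)
  exists_pathCost_eq_zero :=
    have ⟨Pa, hPa⟩ := ha.exists_pathCost_eq_zero
    have ⟨Pb, hPb⟩ := hb.exists_pathCost_eq_zero
    ⟨(Pa, Pb), congrArg₂ (· + ·) hPa hPb |>.trans (add_zero 0)⟩

lemma EqualizingToll.add_sourceToll {G : SPG} {c τ : G.E → ℝ} {C δ : ℝ}
    (h : EqualizingToll G c τ C) (P : G.Path) :
    G.pathCost (c + (τ + G.sourceToll δ)) P = C + δ := by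
  rw [← add_assoc, pathCost_add, h.pathCost_eq, pathCost_sourceToll]

lemma EqualizingToll.parallel {a b : SPG} {c : (parallel a b).E → ℝ} {τa τb Ca Cb}
    (ha : EqualizingToll a (c ∘ Sum.inl) τa Ca) (hb : EqualizingToll b (c ∘ Sum.inr) τb Cb) :
    EqualizingToll (parallel a b) c
      (Sum.elim (τa + a.sourceToll (max Ca Cb - Ca)) (τb + b.sourceToll (max Ca Cb - Cb)))
      (max Ca Cb) where
  nonneg := Sum.rec
    (fun e => add_nonneg (ha.nonneg e) (a.sourceToll_nonneg (by simp) e))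
    (fun e => add_nonneg (hb.nonneg e) (b.sourceToll_nonneg (by simp) e))
  pathCost_eq
    | .inl P => (ha.add_sourceToll P).trans (by ring)
    | .inr P => (hb.add_sourceToll P).trans (by ring)
  exists_pathCost_eq_zero := by
    obtain ⟨Pa, hPa⟩ := ha.exists_pathCost_eq_zero
    obtain ⟨Pb, hPb⟩ := hb.exists_pathCost_eq_zero
    rcases le_total Ca Cb with hab | hba
    · refine ⟨.inr Pb, ?_⟩
      change b.pathCost (τb + b.sourceToll (max Ca Cb - Cb)) Pb = 0
      rw [pathCost_add, hPb, pathCost_sourceToll, max_eq_right hab, sub_self, add_zero]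
    · refine ⟨.inl Pa, ?_⟩
      change a.pathCost (τa + a.sourceToll (max Ca Cb - Ca)) Pa = 0
      rw [pathCost_add, hPa, pathCost_sourceToll, max_eq_left hba, sub_self, add_zero]

theorem exists_equalizingToll : ∀ (G : SPG) (c : G.E → ℝ), ∃ τ C, EqualizingToll G c τ C
  | .edge, c => ⟨_, _, equalizingToll_edge c⟩
  | .series a b, c =>
    have ⟨_, _, ha⟩ := exists_equalizingToll a (c ∘ Sum.inl)
    have ⟨_, _, hb⟩ := exists_equalizingToll b (c ∘ Sum.inr)
    ⟨_, _, ha.series hb⟩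
  | .parallel a b, c =>
    have ⟨_, _, ha⟩ := exists_equalizingToll a (c ∘ Sum.inl)
    have ⟨_, _, hb⟩ := exists_equalizingToll b (c ∘ Sum.inr)
    ⟨_, _, ha.parallel hb⟩

end SPG

theorem spg_equalizing_tolls_general (G : SPG) (c : G.E → ℝ) :
    ∃ τ : G.E → ℝ, (∀ e, 0 ≤ τ e) ∧
      (∀ P Q : G.Path,
        G.pathCost (fun e => c e + τ e) P = G.pathCost (fun e => c e + τ e) Q) ∧
      (∃ P : G.Path, G.pathCost τ P = 0) := by
  obtain ⟨τ, C, h⟩ := G.exists_equalizingToll c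
  exact ⟨τ, h.nonneg, fun P Q => (h.pathCost_eq P).trans (h.pathCost_eq Q).symm,
    h.exists_pathCost_eq_zero⟩

/-- Claim 4.1: in any two-terminal series-parallel graph with nonnegative edge costs
`c`, there exist nonnegative edge tolls `τ` such that every `s`-`t` path is a
shortest `s`-`t` path under edge costs `c + τ` (i.e. all path costs are equal), and
the minimum of `τ(P)` over `s`-`t` paths `P` is `0` (some path has zero toll, and
all tolls are nonnegative). -/
theorem spg_equalizing_tolls (G : SPG) (c : G.E → ℝ) (hc : ∀ e, 0 ≤ c e) :
    ∃ τ : G.E → ℝ, (∀ e, 0 ≤ τ e) ∧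
      (∀ P Q : G.Path,
        G.pathCost (fun e => c e + τ e) P = G.pathCost (fun e => c e + τ e) Q) ∧
      (∃ P : G.Path, G.pathCost τ P = 0) :=
  spg_equalizing_tolls_general G c
end

section
/- Consider the four-node Braess graph with vertices s, u, v, t, edges (s,u) and (v,t) with latency x² + x, edges (s,v) and (u,t) with latency a·x, and edge (u,v) with constant latency b, where a = 1 + (d₁+d₂)/2 and b = d₁d₂/4 for given reals d₂ > d₁ ≥ 1. Then for any demand d routed from s to t, the flow on edge (u,v) at Wardrop equilibrium is strictly positive if and only if d₁ < d < d₂. -/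
/-!
As soon as some flow is routed, both outer paths `s-u-t` and `s-v-t` are used (an empty one
would be strictly faster than every used path), hence have equal latency; since the outer path
latency is strictly increasing in its own flow, they carry the same flow `y`. For such a
symmetric flow of value `d = 2y + y₃` one has, with `ℓ(x) = x² + x`,
`d² - 2(a-1)d + 4b = 4(b + ℓ(y + y₃) - a y) - y₃(4y + 3y₃ + 2a + 2)`,
whose first term is four times the excess of the zigzag latency over the outer one. So the
zigzag path is used iff `d² - 2(a-1)d + 4b < 0`, and with the given `a`, `b` this quadratic
is `(d - d₁)(d - d₂)`.
-/

namespace Braess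

def quadLatency (x : ℝ) : ℝ := x ^ 2 + x

/-- Latency of the path `s-u-t` carrying `y` while the zigzag path `s-u-v-t` carries `z`;
by symmetry it is also the latency of `s-v-t` carrying `y`. -/
def outerLatency (a y z : ℝ) : ℝ := quadLatency (y + z) + a * y

def zigzagLatency (b y₁ y₂ z : ℝ) : ℝ := quadLatency (y₁ + z) + b + quadLatency (y₂ + z)

theorem zigzagLatency_comm (b y₁ y₂ z : ℝ) :
    zigzagLatency b y₁ y₂ z = zigzagLatency b y₂ y₁ z := by
  unfold zigzagLatency
  ring

theorem outerLatency_strictMonoOn {a z : ℝ} (ha : 0 ≤ a) (hz : 0 ≤ z) :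
    StrictMonoOn (fun y => outerLatency a y z) (Set.Ici 0) := by
  intro x hx y hy hxy
  simp only [outerLatency, quadLatency]
  nlinarith [Set.mem_Ici.mp hx, Set.mem_Ici.mp hy]

/-- Wardrop equilibrium with path flows `y₁` on `s-u-t`, `y₂` on `s-v-t`, `y₃` on `s-u-v-t`. -/
structure IsWardrop (a b y₁ y₂ y₃ : ℝ) : Prop where
  nonneg₁ : 0 ≤ y₁
  nonneg₂ : 0 ≤ y₂
  nonneg₃ : 0 ≤ y₃
  used₁ : 0 < y₁ → outerLatency a y₁ y₃ ≤ outerLatency a y₂ y₃ ∧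
    outerLatency a y₁ y₃ ≤ zigzagLatency b y₁ y₂ y₃
  used₂ : 0 < y₂ → outerLatency a y₂ y₃ ≤ outerLatency a y₁ y₃ ∧
    outerLatency a y₂ y₃ ≤ zigzagLatency b y₁ y₂ y₃
  used₃ : 0 < y₃ → zigzagLatency b y₁ y₂ y₃ ≤ outerLatency a y₁ y₃ ∧
    zigzagLatency b y₁ y₂ y₃ ≤ outerLatency a y₂ y₃

namespace IsWardrop

variable {a b y y₁ y₂ y₃ : ℝ}

theorem swap (h : IsWardrop a b y₁ y₂ y₃) : IsWardrop a b y₂ y₁ y₃ where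
  nonneg₁ := h.nonneg₂
  nonneg₂ := h.nonneg₁
  nonneg₃ := h.nonneg₃
  used₁ := by simpa only [zigzagLatency_comm b y₂] using h.used₂
  used₂ := by simpa only [zigzagLatency_comm b y₂] using h.used₁
  used₃ := by simpa only [zigzagLatency_comm b y₂, and_comm] using h.used₃

theorem pos_left (h : IsWardrop a b y₁ y₂ y₃) (ha : 0 < a) (hb : 0 ≤ b)
    (hflow : 0 < y₁ + y₂ + y₃) : 0 < y₁ := by
  rcases h.nonneg₁.eq_or_lt with rfl | hy₁
  · exfalso
    rcases h.nonneg₂.eq_or_lt with rfl | hy₂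
    · have hy₃ : 0 < y₃ := by linarith
      have hle := (h.used₃ hy₃).1
      simp only [zigzagLatency, outerLatency, quadLatency] at hle
      nlinarith
    · exact (h.used₂ hy₂).1.not_gt <|
        outerLatency_strictMonoOn ha.le h.nonneg₃ Set.self_mem_Ici h.nonneg₂ hy₂
  · exact hy₁

theorem pos_right (h : IsWardrop a b y₁ y₂ y₃) (ha : 0 < a) (hb : 0 ≤ b)
    (hflow : 0 < y₁ + y₂ + y₃) : 0 < y₂ :=
  h.swap.pos_left ha hb (by linarith)

theorem eq_of_pos (h : IsWardrop a b y₁ y₂ y₃) (ha : 0 ≤ a) (hy₁ : 0 < y₁) (hy₂ : 0 < y₂) :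
    y₁ = y₂ :=
  (outerLatency_strictMonoOn ha h.nonneg₃).injOn h.nonneg₁ h.nonneg₂ <|
    le_antisymm (h.used₁ hy₁).1 (h.used₂ hy₂).1

theorem zigzag_pos_iff_of_symm (h : IsWardrop a b y y y₃) (ha : 0 ≤ a) (hy : 0 < y)
    {d : ℝ} (hd : y + y + y₃ = d) :
    0 < y₃ ↔ d ^ 2 - 2 * (a - 1) * d + 4 * b < 0 := by
  have key : d ^ 2 - 2 * (a - 1) * d + 4 * b =
      4 * (zigzagLatency b y y y₃ - outerLatency a y y₃) - y₃ * (4 * y + 3 * y₃ + 2 * a + 2) := by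
    subst hd
    simp only [zigzagLatency, outerLatency, quadLatency]
    ring
  rw [key]
  constructor
  · intro hy₃
    have hle := sub_nonpos.mpr (h.used₃ hy₃).1
    nlinarith
  · intro hneg
    by_contra! hy₃
    obtain rfl : y₃ = 0 := le_antisymm hy₃ h.nonneg₃
    have hle := sub_nonneg.mpr (h.used₁ hy).2
    linarith

end IsWardrop

end Braess

open Braess

theorem braess_edge_positive_iff_general
    (d1 d2 d y1 y2 y3 a b c1 c2 c3 : ℝ)
    (hd1 : 1 ≤ d1) (h12 : d1 < d2)
    (ha : a = 1 + (d1 + d2) / 2) (hb : b = d1 * d2 / 4)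
    (hy1 : 0 ≤ y1) (hy2 : 0 ≤ y2) (hy3 : 0 ≤ y3) (hsum : y1 + y2 + y3 = d)
    -- path latencies at the flow (edge flows: su = y1+y3, ut = y1, sv = y2, vt = y2+y3, uv = y3)
    (hc1 : c1 = ((y1 + y3) ^ 2 + (y1 + y3)) + a * y1)
    (hc2 : c2 = a * y2 + ((y2 + y3) ^ 2 + (y2 + y3)))
    (hc3 : c3 = ((y1 + y3) ^ 2 + (y1 + y3)) + b + ((y2 + y3) ^ 2 + (y2 + y3)))
    -- Wardrop equilibrium: used paths have minimal latency
    (heq1 : 0 < y1 → c1 ≤ c2 ∧ c1 ≤ c3)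
    (heq2 : 0 < y2 → c2 ≤ c1 ∧ c2 ≤ c3)
    (heq3 : 0 < y3 → c3 ≤ c1 ∧ c3 ≤ c2) :
    0 < y3 ↔ (d1 < d ∧ d < d2) := by
  have ha0 : 0 < a := by rw [ha]; linarith
  have hb0 : 0 ≤ b := by rw [hb]; nlinarith
  have hW : IsWardrop a b y1 y2 y3 := by
    have hc2' : c2 = outerLatency a y2 y3 := by rw [hc2, outerLatency, quadLatency]; ring
    subst hc1 hc2' hc3
    exact ⟨hy1, hy2, hy3, heq1, heq2, heq3⟩
  rcases (hsum ▸ add_nonneg (add_nonneg hy1 hy2) hy3 : 0 ≤ d).eq_or_lt with rfl | hd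
  · exact iff_of_false (fun _ => by linarith) (fun ⟨_, _⟩ => by linarith)
  have hy1pos := hW.pos_left ha0 hb0 (hsum ▸ hd)
  obtain rfl := (hW.eq_of_pos ha0.le hy1pos (hW.pos_right ha0 hb0 (hsum ▸ hd))).symm
  have hroots : d ^ 2 - 2 * (a - 1) * d + 4 * b = (d - d1) * (d - d2) := by
    subst ha hb; ring
  rw [hW.zigzag_pos_iff_of_symm ha0.le hy1pos hsum, hroots, sub_mul_sub_neg_iff d h12.le]

/-- First part of Claim 5.7. In the Braess graph with edges `(s,u)`, `(v,t)` of
latency `x² + x`, edges `(s,v)`, `(u,t)` of latency `a·x` with `a = 1 + (d₁+d₂)/2`,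
and edge `(u,v)` of constant latency `b = d₁d₂/4` (where `d₂ > d₁ ≥ 1`), a Wardrop
equilibrium for demand `d ≥ 0`, described by its path flows `y₁` (on `s-u-t`),
`y₂` (on `s-v-t`) and `y₃` (on `s-u-v-t`), has strictly positive flow on the Braess
edge `(u,v)` iff `d₁ < d < d₂`. -/
theorem braess_edge_positive_iff
    (d1 d2 d y1 y2 y3 a b c1 c2 c3 : ℝ)
    (hd1 : 1 ≤ d1) (h12 : d1 < d2) (hd : 0 ≤ d)
    (ha : a = 1 + (d1 + d2) / 2) (hb : b = d1 * d2 / 4)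
    (hy1 : 0 ≤ y1) (hy2 : 0 ≤ y2) (hy3 : 0 ≤ y3) (hsum : y1 + y2 + y3 = d)
    -- path latencies at the flow (edge flows: su = y1+y3, ut = y1, sv = y2, vt = y2+y3, uv = y3)
    (hc1 : c1 = ((y1 + y3) ^ 2 + (y1 + y3)) + a * y1)
    (hc2 : c2 = a * y2 + ((y2 + y3) ^ 2 + (y2 + y3)))
    (hc3 : c3 = ((y1 + y3) ^ 2 + (y1 + y3)) + b + ((y2 + y3) ^ 2 + (y2 + y3)))
    -- Wardrop equilibrium: used paths have minimal latency
    (heq1 : 0 < y1 → c1 ≤ c2 ∧ c1 ≤ c3)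
    (heq2 : 0 < y2 → c2 ≤ c1 ∧ c2 ≤ c3)
    (heq3 : 0 < y3 → c3 ≤ c1 ∧ c3 ≤ c2) :
    0 < y3 ↔ (d1 < d ∧ d < d2) :=
  braess_edge_positive_iff_general d1 d2 d y1 y2 y3 a b c1 c2 c3 hd1 h12 ha hb hy1 hy2 hy3 hsum hc1
    hc2 hc3 heq1 heq2 heq3
end

section
/- Consider the Braess graph with vertices s, u, v, t, edges (s,u), (v,t) with latency l(x) = x, edges (s,v), (u,t) with constant latency 1, and edge (u,v) with latency 0. For any Stackelberg routing g, if the induced Wardrop equilibrium f(g) has strictly positive flow on edge (u,v), then the total demand d satisfies d < 2 and the common shortest-path delay at the total flow f(g)+g is at most 2. Furthermore, if g_e = 0 for every edge of the Braess graph and the demand d ∈ [1/2, 3/2], then f_{uv}(g) ≥ 1/2. -/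
/-! If the zig-zag path `s-u-v-t` is used, it is no longer than `s-u-t` and `s-v-t`, which
forces the loads on `(s,u)` and `(v,t)` to be at most `1`; the demand is the sum of these two
loads minus the positive flow counted twice on `(u,v)`. Without Stackelberg flow, an outer path
that is used must be no longer than the zig-zag path, so the opposite linear edge carries load at
least `1`; hence each outer path carries at most `max 0 (d - 1)` and the zig-zag path at least
`min d (2 - d)`. -/

lemma braess_outer_path_flow_le {d z1 z2 z3 : ℝ} (hsum : z1 + z2 + z3 = d)
    (hused : 0 < z1 → 1 ≤ z2 + z3) : z1 ≤ max 0 (d - 1) := by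
  rcases le_or_gt z1 0 with hz1 | hz1
  · exact le_max_of_le_left hz1
  · exact le_max_of_le_right (by linarith [hused hz1])

theorem braess_stackelberg_claim_general
    (d g1 g2 g3 z1 z2 z3 c1 c2 c3 : ℝ)
    (hg3 : 0 ≤ g3)
    (hzsum : z1 + z2 + z3 = d - (g1 + g2 + g3))
    -- path latencies at the total flow h = f(g) + g
    -- (edge flows: h_su = z1+z3+g1+g3, h_ut = z1+g1, h_sv = z2+g2, h_vt = z2+z3+g2+g3, h_uv = z3+g3)
    (hc1 : c1 = (z1 + z3 + g1 + g3) + 1)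
    (hc2 : c2 = 1 + (z2 + z3 + g2 + g3))
    (hc3 : c3 = (z1 + z3 + g1 + g3) + (z2 + z3 + g2 + g3))
    -- `f(g)` is a Wardrop equilibrium of the modified game
    (heq1 : 0 < z1 → c1 ≤ c2 ∧ c1 ≤ c3)
    (heq2 : 0 < z2 → c2 ≤ c1 ∧ c2 ≤ c3)
    (heq3 : 0 < z3 → c3 ≤ c1 ∧ c3 ≤ c2) :
    (0 < z3 → d < 2 ∧ min (min c1 c2) c3 ≤ 2) ∧
    (g1 = 0 → g2 = 0 → g3 = 0 → 1 / 2 ≤ d → d ≤ 3 / 2 → 1 / 2 ≤ z3) := by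
  subst hc1 hc2 hc3
  constructor
  · intro hz3
    obtain ⟨hshorter_sut, hshorter_svt⟩ := heq3 hz3
    have hsu : z1 + z3 + g1 + g3 ≤ 1 := by linarith
    have hvt : z2 + z3 + g2 + g3 ≤ 1 := by linarith
    exact ⟨by linarith, (min_le_right _ _).trans (by linarith)⟩
  · rintro rfl rfl rfl hd_lo hd_hi
    have hz1 : z1 ≤ max 0 (d - 1) :=
      braess_outer_path_flow_le (z2 := z2) (z3 := z3) (by linarith)
        fun h ↦ by linarith [(heq1 h).2]
    have hz2 : z2 ≤ max 0 (d - 1) :=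
      braess_outer_path_flow_le (z2 := z1) (z3 := z3) (by linarith)
        fun h ↦ by linarith [(heq2 h).2]
    rcases le_total d 1 with hd | hd
    · rw [max_eq_left (by linarith)] at hz1 hz2
      linarith
    · rw [max_eq_right (by linarith)] at hz1 hz2
      linarith

/-- Claim 5.10. In the Braess graph with edges `(s,u)`, `(v,t)` of latency `x`,
edges `(s,v)`, `(u,t)` of constant latency `1`, and edge `(u,v)` of latency `0`,
let `g` be a Stackelberg routing with path flows `g₁` (on `s-u-t`), `g₂` (on
`s-v-t`), `g₃` (on `s-u-v-t`), and let the induced Wardrop equilibrium `f(g)` of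
the remaining demand `d − (g₁+g₂+g₃)` have path flows `z₁, z₂, z₃`. If `f(g)` has
strictly positive flow on edge `(u,v)` (i.e. `z₃ > 0`), then `d < 2` and the
shortest-path delay at the total flow `f(g)+g` is at most `2`. Furthermore, if
`g = 0` on every edge and `d ∈ [1/2, 3/2]`, then `f_{uv}(g) = z₃ ≥ 1/2`. -/
theorem braess_stackelberg_claim
    (d g1 g2 g3 z1 z2 z3 c1 c2 c3 : ℝ)
    (hg1 : 0 ≤ g1) (hg2 : 0 ≤ g2) (hg3 : 0 ≤ g3)
    (hz1 : 0 ≤ z1) (hz2 : 0 ≤ z2) (hz3 : 0 ≤ z3)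
    (hgd : g1 + g2 + g3 ≤ d)
    (hzsum : z1 + z2 + z3 = d - (g1 + g2 + g3))
    -- path latencies at the total flow h = f(g) + g
    -- (edge flows: h_su = z1+z3+g1+g3, h_ut = z1+g1, h_sv = z2+g2, h_vt = z2+z3+g2+g3, h_uv = z3+g3)
    (hc1 : c1 = (z1 + z3 + g1 + g3) + 1)
    (hc2 : c2 = 1 + (z2 + z3 + g2 + g3))
    (hc3 : c3 = (z1 + z3 + g1 + g3) + (z2 + z3 + g2 + g3))
    -- `f(g)` is a Wardrop equilibrium of the modified game
    (heq1 : 0 < z1 → c1 ≤ c2 ∧ c1 ≤ c3)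
    (heq2 : 0 < z2 → c2 ≤ c1 ∧ c2 ≤ c3)
    (heq3 : 0 < z3 → c3 ≤ c1 ∧ c3 ≤ c2) :
    (0 < z3 → d < 2 ∧ min (min c1 c2) c3 ≤ 2) ∧
    (g1 = 0 → g2 = 0 → g3 = 0 → 1 / 2 ≤ d → d ≤ 3 / 2 → 1 / 2 ≤ z3) :=
  braess_stackelberg_claim_general d g1 g2 g3 z1 z2 z3 c1 c2 c3 hg3 hzsum hc1 hc2 hc3 heq1 heq2 heq3
end

section
/- Let G be a directed graph with a single source-sink pair (s, t), and let τ be a toll vector with negative toll only on a single edge e' = (u, w). Suppose the Wardrop equilibrium flow g with tolls τ is strictly positive on e', and let E⁺ be a set of edges containing the support of g such that (V, E⁺) is acyclic. Let σ be a topological order of (V, E⁺), S = {x : σ(x) ≤ σ(u)}, and define τ'_{xy} = τ_{xy} − τ_{e'} if x ∈ S and y ∉ S or (x,y) ∉ E⁺, and τ'_{xy} = τ_{xy} otherwise. Then τ' ≥ 0 on edge e', every s-t path's toll increases by at least −τ_{e'}, every path used by g has its toll increased by exactly −τ_{e'}, and consequently g is also the Wardrop equilibrium under tolls τ'. -/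
/-!
Let `S = {x : σ x ≤ σ u}`. No edge of `E⁺` enters `S`, so `g` carries no flow into `S`, while it
carries positive flow out of `S` along `e'`; by flow conservation `s` and `t` therefore lie on
opposite sides of the cut. Along any `s`-`t` walk the `{0,1}`-potential `[x ∈ S]` telescopes, so
the walk uses at least one edge that crosses the cut, and every crossing edge (forward, or not in
`E⁺`) gets its toll raised by `-τ e'`. A walk inside `E⁺` never crosses backwards, so it crosses
forwards exactly once and its toll is raised by exactly `-τ e'`. Raising the cost of every used
path by the same constant and that of every other path by at least as much keeps `g` an equilibrium.
-/

open Finset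

section Walk

variable {α : Type*}

def IsEdgeWalk (p : List (α × α)) (a b : α) : Prop :=
  p.head?.map Prod.fst = some a ∧ p.getLast?.map Prod.snd = some b ∧
    p.IsChain (fun e f => e.2 = f.1)

theorem IsEdgeWalk.sum_map_sub_eq {β : Type*} [AddCommGroup β] (φ : α → β) :
    ∀ {p : List (α × α)} {a b : α}, IsEdgeWalk p a b →
      (p.map fun e => φ e.1 - φ e.2).sum = φ a - φ b
  | [], _, _, ⟨ha, _, _⟩ => by simp at ha
  | [e], _, _, ⟨ha, hb, _⟩ => by
      simp only [List.head?_cons, List.getLast?_singleton, Option.map_some,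
        Option.some.injEq] at ha hb
      simp [← ha, ← hb]
  | e :: e₂ :: rest, a, b, ⟨ha, hb, hch⟩ => by
      obtain ⟨hlink, hch⟩ := List.isChain_cons_cons.mp hch
      simp only [List.head?_cons, Option.map_some, Option.some.injEq] at ha
      rw [List.getLast?_cons_cons] at hb
      have ih := IsEdgeWalk.sum_map_sub_eq φ (a := e₂.1) ⟨rfl, hb, hch⟩
      rw [List.map_cons, List.sum_cons, ih, ← ha, hlink]
      abel

theorem IsEdgeWalk.abs_sub_le_sum {β : Type*} [AddCommGroup β] [LinearOrder β]
    [IsOrderedAddMonoid β] {φ : α → β} {f : α × α → β} {p : List (α × α)} {a b : α}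
    (hp : IsEdgeWalk p a b) (hf : ∀ e ∈ p, |φ e.1 - φ e.2| ≤ f e) :
    |φ a - φ b| ≤ (p.map f).sum :=
  calc |φ a - φ b| = |(p.map fun e => φ e.1 - φ e.2).sum| := by rw [hp.sum_map_sub_eq]
    _ ≤ ((p.map fun e => φ e.1 - φ e.2).map abs).sum :=
        List.le_sum_of_subadditive abs abs_zero.le abs_add_le _
    _ ≤ (p.map f).sum := by rw [List.map_map]; exact List.sum_le_sum hf

end Walk

section Cut

variable {V : Type*} [DecidableEq V] (P : V → Prop) [DecidablePred P] (Eplus : Finset (V × V))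

def cutPotential (v : V) : ℝ := if P v then 1 else 0

def shiftIndicator (e : V × V) : ℝ := if (P e.1 ∧ ¬ P e.2) ∨ e ∉ Eplus then 1 else 0

variable {P Eplus}

theorem abs_cutPotential_sub_le_shiftIndicator (hclosed : ∀ e ∈ Eplus, P e.2 → P e.1)
    (e : V × V) :
    |cutPotential P e.1 - cutPotential P e.2| ≤ shiftIndicator P Eplus e := by
  have := hclosed e
  unfold cutPotential shiftIndicator
  split_ifs <;> simp_all

theorem shiftIndicator_eq_cutPotential_sub (hclosed : ∀ e ∈ Eplus, P e.2 → P e.1)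
    {e : V × V} (he : e ∈ Eplus) :
    shiftIndicator P Eplus e = cutPotential P e.1 - cutPotential P e.2 := by
  have := hclosed e he
  unfold cutPotential shiftIndicator
  split_ifs <;> simp_all

theorem one_le_sum_shiftIndicator (hclosed : ∀ e ∈ Eplus, P e.2 → P e.1)
    {p : List (V × V)} {a b : V} (hp : IsEdgeWalk p a b) (hab : ¬ (P a ↔ P b)) :
    1 ≤ (p.map (shiftIndicator P Eplus)).sum := by
  have hcross : |cutPotential P a - cutPotential P b| = 1 := by
    unfold cutPotential
    split_ifs <;> simp_all
  exact hcross ▸ hp.abs_sub_le_sum fun e _ => abs_cutPotential_sub_le_shiftIndicator hclosed e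

theorem sum_shiftIndicator_eq_one (hclosed : ∀ e ∈ Eplus, P e.2 → P e.1)
    {p : List (V × V)} {a b : V} (hp : IsEdgeWalk p a b) (hab : ¬ (P a ↔ P b))
    (hpE : ∀ e ∈ p, e ∈ Eplus) :
    (p.map (shiftIndicator P Eplus)).sum = 1 := by
  have htelescope : (p.map (shiftIndicator P Eplus)).sum = cutPotential P a - cutPotential P b := by
    rw [← hp.sum_map_sub_eq]
    exact congrArg List.sum <| List.map_congr_left fun e he =>
      shiftIndicator_eq_cutPotential_sub hclosed (hpE e he)
  have hle : cutPotential P a - cutPotential P b ≤ 1 := by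
    unfold cutPotential
    split_ifs <;> norm_num
  exact le_antisymm (htelescope ▸ hle) (one_le_sum_shiftIndicator hclosed hp hab)

end Cut

section Flow

variable {V : Type*} [DecidableEq V] (E : Finset (V × V)) (g : V × V → ℝ)

def netOutflow (v : V) : ℝ :=
  ∑ e ∈ E with e.1 = v, g e - ∑ e ∈ E with e.2 = v, g e

variable {E g}

theorem sum_netOutflow (T : Finset V) :
    ∑ v ∈ T, netOutflow E g v =
      ∑ e ∈ E, ((if e.1 ∈ T then g e else 0) - if e.2 ∈ T then g e else 0) := by
  simp only [netOutflow, sum_sub_distrib]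
  rw [sum_fiberwise_eq_sum_filter, sum_fiberwise_eq_sum_filter, sum_filter, sum_filter]

theorem sum_netOutflow_eq_zero [Fintype V] {s t : V}
    (hcons : ∀ v, v ≠ s → v ≠ t → ∑ e ∈ E with e.2 = v, g e = ∑ e ∈ E with e.1 = v, g e)
    {T : Finset V} (hst : s ∈ T ↔ t ∈ T) :
    ∑ v ∈ T, netOutflow E g v = 0 := by
  have hzero : ∀ U : Finset V, s ∉ U → t ∉ U → ∑ v ∈ U, netOutflow E g v = 0 :=
    fun U hs ht => sum_eq_zero fun v hv => sub_eq_zero.mpr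
      (hcons v (ne_of_mem_of_not_mem hv hs) (ne_of_mem_of_not_mem hv ht)).symm
  by_cases hs : s ∈ T
  · have htotal : ∑ v, netOutflow E g v = 0 := by simp [sum_netOutflow]
    rw [← sum_add_sum_compl T, hzero Tᶜ (by simpa) (by simpa [← hst])] at htotal
    simpa using htotal
  · exact hzero T hs (by rwa [← hst])

theorem sum_netOutflow_pos {T : Finset V} (hg0 : ∀ e ∈ E, 0 ≤ g e)
    (hentry : ∀ e ∈ E, e.2 ∈ T → e.1 ∉ T → g e ≤ 0)
    {e' : V × V} (he' : e' ∈ E) (he'₁ : e'.1 ∈ T) (he'₂ : e'.2 ∉ T) (hge' : 0 < g e') :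
    0 < ∑ v ∈ T, netOutflow E g v := by
  rw [sum_netOutflow]
  refine sum_pos' (fun e he => ?_) ⟨e', he', by simp [he'₁, he'₂, hge']⟩
  have := hg0 e he
  have := hentry e he
  split_ifs <;> simp_all

theorem not_iff_of_flow_leaves [Fintype V] {s t : V}
    (hcons : ∀ v, v ≠ s → v ≠ t → ∑ e ∈ E with e.2 = v, g e = ∑ e ∈ E with e.1 = v, g e)
    (hg0 : ∀ e ∈ E, 0 ≤ g e) {P : V → Prop} [DecidablePred P]
    (hentry : ∀ e ∈ E, P e.2 → ¬ P e.1 → g e ≤ 0)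
    {e' : V × V} (he' : e' ∈ E) (he'₁ : P e'.1) (he'₂ : ¬ P e'.2) (hge' : 0 < g e') :
    ¬ (P s ↔ P t) := fun hst =>
  (sum_netOutflow_pos (T := univ.filter P) hg0 (by simpa using hentry) he' (by simpa using he'₁)
    (by simpa using he'₂) hge').ne'
  (sum_netOutflow_eq_zero hcons (by simpa using hst))

end Flow

theorem sum_map_add_mul_le_of_le {ι : Type*} (cost f : ι → ℝ) {c : ℝ} (hc : 0 ≤ c)
    {p q : List ι} (hcost : (p.map cost).sum ≤ (q.map cost).sum)
    (hf : (p.map f).sum ≤ (q.map f).sum) :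
    (p.map fun e => cost e + c * f e).sum ≤ (q.map fun e => cost e + c * f e).sum := by
  simp only [List.sum_map_add, List.sum_map_mul_left]
  exact add_le_add hcost (mul_le_mul_of_nonneg_left hf hc)

theorem nonnegative_tolls_shift_general
    {V : Type*} [Fintype V] [DecidableEq V]
    (Eset Eplus : Finset (V × V))
    (s t : V)
    (l : V × V → ℝ → ℝ)
    (τ : V × V → ℝ) (e' : V × V) (he'E : e' ∈ Eset)
    (hτneg : τ e' < 0)
    (g : V × V → ℝ)
    (hg0 : ∀ e, 0 ≤ g e)
    (hcons : ∀ v : V, v ≠ s → v ≠ t →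
      ∑ e ∈ Eset.filter (fun e => e.2 = v), g e =
        ∑ e ∈ Eset.filter (fun e => e.1 = v), g e)
    (hge' : 0 < g e')
    (hsupport : ∀ e ∈ Eset, 0 < g e → e ∈ Eplus)
    (σ : V → ℕ) (hσ : ∀ e ∈ Eplus, σ e.1 < σ e.2)
    (IsPath : List (V × V) → Prop)
    (hIsPath : ∀ p, IsPath p ↔ p ≠ [] ∧ (∀ e ∈ p, e ∈ Eset) ∧
        p.head?.map Prod.fst = some s ∧ p.getLast?.map Prod.snd = some t ∧
        List.Chain' (fun e f => e.2 = f.1) p)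
    -- `g` is a Wardrop equilibrium under tolls `τ`
    (heqm : ∀ p q, IsPath p → IsPath q → (∀ e ∈ p, 0 < g e) →
      (p.map fun e => l e (g e) + τ e).sum ≤ (q.map fun e => l e (g e) + τ e).sum)
    (τ' : V × V → ℝ)
    (hτ' : ∀ e : V × V, τ' e =
      if (σ e.1 ≤ σ e'.1 ∧ ¬ σ e.2 ≤ σ e'.1) ∨ e ∉ Eplus then τ e - τ e' else τ e) :
    0 ≤ τ' e' ∧
    (∀ p, IsPath p → (p.map τ).sum - τ e' ≤ (p.map τ').sum) ∧
    (∀ p, IsPath p → (∀ e ∈ p, 0 < g e) → (p.map τ').sum = (p.map τ).sum - τ e') ∧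
    (∀ p q, IsPath p → IsPath q → (∀ e ∈ p, 0 < g e) →
      (p.map fun e => l e (g e) + τ' e).sum ≤ (q.map fun e => l e (g e) + τ' e).sum) := by
  set P : V → Prop := fun v => σ v ≤ σ e'.1
  have he'plus : e' ∈ Eplus := hsupport e' he'E hge'
  have hclosed : ∀ e ∈ Eplus, P e.2 → P e.1 := fun e he h => (hσ e he).le.trans h
  have hsep : ¬ (P s ↔ P t) :=
    not_iff_of_flow_leaves hcons (fun e _ => hg0 e)
      (fun e he h₂ h₁ => not_lt.mp fun hpos => h₁ (hclosed e (hsupport e he hpos) h₂))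
      he'E le_rfl (hσ e' he'plus).not_ge hge'
  have hwalk : ∀ p, IsPath p → IsEdgeWalk p s t := fun p hp =>
    have ⟨_, _, hs, ht, hch⟩ := (hIsPath p).1 hp; ⟨hs, ht, hch⟩
  have hlow : ∀ p, IsPath p → 1 ≤ (p.map (shiftIndicator P Eplus)).sum := fun p hp =>
    one_le_sum_shiftIndicator hclosed (hwalk p hp) hsep
  have hused : ∀ p, IsPath p → (∀ e ∈ p, 0 < g e) →
      (p.map (shiftIndicator P Eplus)).sum = 1 := fun p hp hpos =>
    sum_shiftIndicator_eq_one hclosed (hwalk p hp) hsep fun e he =>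
      hsupport e (((hIsPath p).1 hp).2.1 e he) (hpos e he)
  have hc : 0 ≤ -τ e' := neg_nonneg.mpr hτneg.le
  obtain rfl : τ' = fun e => τ e + -τ e' * shiftIndicator P Eplus e := funext fun e => by
    rw [hτ' e, shiftIndicator]; split_ifs <;> ring
  refine ⟨?_, fun p hp => ?_, fun p hp hpos => ?_, fun p q hp hq hpos => ?_⟩
  · have : shiftIndicator P Eplus e' = 1 := if_pos (.inl ⟨le_rfl, (hσ e' he'plus).not_ge⟩)
    simp [this]
  · simp only [List.sum_map_add, List.sum_map_mul_left]
    linarith [mul_le_mul_of_nonneg_left (hlow p hp) hc]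
  · simp only [List.sum_map_add, List.sum_map_mul_left, hused p hp hpos]
    ring
  · simpa only [add_assoc] using sum_map_add_mul_le_of_le (fun e => l e (g e) + τ e)
      (shiftIndicator P Eplus) hc (heqm p q hp hq hpos)
      ((hused p hp hpos).trans_le (hlow q hq))

/-- Claim 4.10 (clm:nonnegativetolls). Single-commodity routing game on a directed
graph with edge set `Eset ⊆ V × V`, strictly increasing latencies, and tolls `τ`
that are negative only on the single edge `e' = (u,w)`. Suppose the Wardrop
equilibrium `g` under `τ` is strictly positive on `e'`, `Eplus` contains the support
of `g` and is acyclic (witnessed by a topological order `σ`), and `τ'` is obtained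
from `τ` by adding `−τ_{e'}` to every edge crossing the cut
`S = {x : σ(x) ≤ σ(u)}` forward and to every edge outside `Eplus`. Then `τ'` is
nonnegative on `e'`, every `s`-`t` path's toll increases by at least `−τ_{e'}`,
every path used by `g` has its toll increased by exactly `−τ_{e'}`, and `g` remains
a Wardrop equilibrium under `τ'`. -/
theorem nonnegative_tolls_shift
    {V : Type*} [Fintype V] [DecidableEq V]
    (Eset Eplus : Finset (V × V)) (hplusE : Eplus ⊆ Eset)
    (s t : V) (hst : s ≠ t) (d : ℝ)
    (l : V × V → ℝ → ℝ) (hl : ∀ e, StrictMono (l e))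
    (τ : V × V → ℝ) (e' : V × V) (he'E : e' ∈ Eset)
    (hτneg : τ e' < 0) (hτpos : ∀ e, e ≠ e' → 0 ≤ τ e)
    (g : V × V → ℝ)
    (hg0 : ∀ e, 0 ≤ g e) (hgsupp : ∀ e ∉ Eset, g e = 0)
    (hcons : ∀ v : V, v ≠ s → v ≠ t →
      ∑ e ∈ Eset.filter (fun e => e.2 = v), g e =
        ∑ e ∈ Eset.filter (fun e => e.1 = v), g e)
    (hval : ∑ e ∈ Eset.filter (fun e => e.1 = s), g e -
        ∑ e ∈ Eset.filter (fun e => e.2 = s), g e = d)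
    (hge' : 0 < g e')
    (hsupport : ∀ e ∈ Eset, 0 < g e → e ∈ Eplus)
    (σ : V → ℕ) (hσ : ∀ e ∈ Eplus, σ e.1 < σ e.2)
    (IsPath : List (V × V) → Prop)
    (hIsPath : ∀ p, IsPath p ↔ p ≠ [] ∧ (∀ e ∈ p, e ∈ Eset) ∧
        p.head?.map Prod.fst = some s ∧ p.getLast?.map Prod.snd = some t ∧
        List.Chain' (fun e f => e.2 = f.1) p)
    -- `g` is a Wardrop equilibrium under tolls `τ`
    (heqm : ∀ p q, IsPath p → IsPath q → (∀ e ∈ p, 0 < g e) →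
      (p.map fun e => l e (g e) + τ e).sum ≤ (q.map fun e => l e (g e) + τ e).sum)
    (τ' : V × V → ℝ)
    (hτ' : ∀ e : V × V, τ' e =
      if (σ e.1 ≤ σ e'.1 ∧ ¬ σ e.2 ≤ σ e'.1) ∨ e ∉ Eplus then τ e - τ e' else τ e) :
    0 ≤ τ' e' ∧
    (∀ p, IsPath p → (p.map τ).sum - τ e' ≤ (p.map τ').sum) ∧
    (∀ p, IsPath p → (∀ e ∈ p, 0 < g e) → (p.map τ').sum = (p.map τ).sum - τ e') ∧
    (∀ p q, IsPath p → IsPath q → (∀ e ∈ p, 0 < g e) →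
      (p.map fun e => l e (g e) + τ' e).sum ≤ (q.map fun e => l e (g e) + τ' e).sum) :=
  nonnegative_tolls_shift_general Eset Eplus s t l τ e' he'E hτneg g hg0 hcons hge' hsupport σ hσ
    IsPath hIsPath heqm τ' hτ'
end

section
/- Fix d₁, d₂ with d₂ > d₁ ≥ 1 and d₂ − d₁ ≥ √(2(d₁+d₂)). In the Braess graph with edges (s,u), (v,t) of latency x² + x, edges (s,v), (u,t) of latency a·x with a = 1 + (d₁+d₂)/2, and edge (u,v) of constant latency b = d₁d₂/4, the Wardrop equilibrium for demand d = (d₁+d₂)/2 has flow at least 1/12 on edge (u,v). -/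
/-!
With `x` the flow on `(s,u)`, the equilibrium is symmetric (`y₁ = y₂`) and uses all three
paths: without the Braess edge the split `d/2, d/2` would make `s-u-v-t` strictly cheaper.
Equal costs of `s-u-t` and `s-u-v-t` then give a quadratic for `t = y₃ = 2x - d`, which for
`a = 1 + d` and `4b = d₁d₂` reads `t² + 4(d + 1)t = (d₂ - d₁)²/4`. The gap hypothesis makes the
right-hand side at least `d ≥ 1`, which forces `t ≥ 1/12`.
-/

namespace Braess

lemma quadLatency_zero : quadLatency 0 = 0 := by
  norm_num [quadLatency]

lemma quadLatency_pos {x : ℝ} (hx : 0 < x) : 0 < quadLatency x := by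
  unfold quadLatency
  positivity

/-- Path costs, with `y₁, y₂, y₃` the flows on `s-u-t`, `s-v-t`, `s-u-v-t`. -/
def cost₁ (a y₁ y₃ : ℝ) : ℝ := quadLatency (y₁ + y₃) + a * y₁

def cost₂ (a y₂ y₃ : ℝ) : ℝ := a * y₂ + quadLatency (y₂ + y₃)

def cost₃ (b y₁ y₂ y₃ : ℝ) : ℝ := quadLatency (y₁ + y₃) + b + quadLatency (y₂ + y₃)

structure IsEquilibrium (a b d y₁ y₂ y₃ : ℝ) : Prop where
  nonneg₁ : 0 ≤ y₁
  nonneg₂ : 0 ≤ y₂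
  nonneg₃ : 0 ≤ y₃
  sum_eq : y₁ + y₂ + y₃ = d
  opt₁ : 0 < y₁ → cost₁ a y₁ y₃ ≤ cost₂ a y₂ y₃ ∧ cost₁ a y₁ y₃ ≤ cost₃ b y₁ y₂ y₃
  opt₂ : 0 < y₂ → cost₂ a y₂ y₃ ≤ cost₁ a y₁ y₃ ∧ cost₂ a y₂ y₃ ≤ cost₃ b y₁ y₂ y₃
  opt₃ : 0 < y₃ → cost₃ b y₁ y₂ y₃ ≤ cost₁ a y₁ y₃ ∧ cost₃ b y₁ y₂ y₃ ≤ cost₂ a y₂ y₃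

namespace IsEquilibrium

variable {a b d y₁ y₂ y₃ : ℝ}

lemma eq_of_pos (h : IsEquilibrium a b d y₁ y₂ y₃) (ha : 0 ≤ a) (h₁ : 0 < y₁) (h₂ : 0 < y₂) :
    y₁ = y₂ := by
  have hcost : cost₁ a y₁ y₃ = cost₂ a y₂ y₃ := le_antisymm (h.opt₁ h₁).1 (h.opt₂ h₂).1
  unfold cost₁ cost₂ quadLatency at hcost
  have hfactor : (y₁ - y₂) * (y₁ + y₂ + 2 * y₃ + 1 + a) = 0 := by linear_combination hcost
  have hpos : y₁ + y₂ + 2 * y₃ + 1 + a ≠ 0 := by linarith [h.nonneg₃]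
  exact sub_eq_zero.1 ((mul_eq_zero.1 hfactor).resolve_right hpos)

/-- `hprofit` says that `s-u-v-t` is strictly cheaper than the other paths at the
equilibrium `d/2, d/2` of the network without the edge `(u,v)`. -/
lemma pos₃ (h : IsEquilibrium a b d y₁ y₂ y₃) (ha : 0 ≤ a) (hd : 0 < d)
    (hprofit : b + quadLatency (d / 2) < a * (d / 2)) : 0 < y₃ := by
  by_contra! h₃
  obtain rfl : y₃ = 0 := le_antisymm h₃ h.nonneg₃
  have hsum := h.sum_eq
  have hℓd := quadLatency_pos hd
  rcases h.nonneg₁.lt_or_eq with h₁ | rfl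
  · rcases h.nonneg₂.lt_or_eq with h₂ | rfl
    · have hy₂ : y₂ = d / 2 := by linarith [h.eq_of_pos ha h₁ h₂]
      have hy₁ : y₁ = d / 2 := by linarith
      have hle := (h.opt₁ h₁).2
      unfold cost₁ cost₃ at hle
      rw [hy₁, hy₂, add_zero] at hle
      linarith
    · have hle := (h.opt₁ h₁).1
      unfold cost₁ cost₂ at hle
      rw [show y₁ = d by linarith, add_zero, zero_add, quadLatency_zero] at hle
      nlinarith
  · have hle := (h.opt₂ (by linarith)).1
    unfold cost₁ cost₂ at hle
    rw [show y₂ = d by linarith, add_zero, zero_add, quadLatency_zero] at hle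
    nlinarith

lemma pos₁ (h : IsEquilibrium a b d y₁ y₂ y₃) (hb : 0 ≤ b) (h₃ : 0 < y₃) : 0 < y₁ := by
  by_contra! h₁
  obtain rfl : y₁ = 0 := le_antisymm h₁ h.nonneg₁
  have hle := (h.opt₃ h₃).1
  unfold cost₁ cost₃ at hle
  linarith [quadLatency_pos (add_pos_of_nonneg_of_pos h.nonneg₂ h₃)]

lemma pos₂ (h : IsEquilibrium a b d y₁ y₂ y₃) (hb : 0 ≤ b) (h₃ : 0 < y₃) : 0 < y₂ := by
  by_contra! h₂
  obtain rfl : y₂ = 0 := le_antisymm h₂ h.nonneg₂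
  have hle := (h.opt₃ h₃).2
  unfold cost₂ cost₃ at hle
  linarith [quadLatency_pos (add_pos_of_nonneg_of_pos h.nonneg₁ h₃)]

lemma sq_add_mul_add_eq_zero (h : IsEquilibrium a b d y₁ y₂ y₃) (ha : 0 ≤ a)
    (h₁ : 0 < y₁) (h₂ : 0 < y₂) (h₃ : 0 < y₃) :
    y₃ ^ 2 + 2 * (a + d + 1) * y₃ + (d ^ 2 + 2 * d + 4 * b - 2 * a * d) = 0 := by
  have hcost : cost₁ a y₁ y₃ = cost₃ b y₁ y₂ y₃ := le_antisymm (h.opt₁ h₁).2 (h.opt₃ h₃).1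
  unfold cost₁ cost₃ quadLatency at hcost
  rw [← h.eq_of_pos ha h₁ h₂] at hcost
  obtain rfl : d = 2 * y₁ + y₃ := by linarith [h.sum_eq, h.eq_of_pos ha h₁ h₂]
  linear_combination -4 * hcost

end IsEquilibrium

lemma one_div_twelve_le {d t : ℝ} (hd : 1 ≤ d) (ht : 0 ≤ t) (h : d ≤ t ^ 2 + 4 * (d + 1) * t) :
    1 / 12 ≤ t := by
  by_contra! ht'
  nlinarith [mul_pos (by linarith : (0 : ℝ) < d + 1) (by linarith : 0 < 1 / 12 - t)]

end Braess

/-- Second part of Claim 5.7. In the Braess graph with edges `(s,u)`, `(v,t)` of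
latency `x² + x`, edges `(s,v)`, `(u,t)` of latency `a·x` with `a = 1 + (d₁+d₂)/2`,
and edge `(u,v)` of constant latency `b = d₁d₂/4`, where `d₂ > d₁ ≥ 1` and
`d₂ − d₁ ≥ √(2(d₁+d₂))`, the Wardrop equilibrium for demand `d = (d₁+d₂)/2`
(path flows `y₁` on `s-u-t`, `y₂` on `s-v-t`, `y₃` on `s-u-v-t`) has flow at least
`1/12` on the Braess edge `(u,v)`. -/
theorem braess_edge_flow_lower_bound
    (d1 d2 d y1 y2 y3 a b c1 c2 c3 : ℝ)
    (hd1 : 1 ≤ d1) (h12 : d1 < d2)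
    (hgap : Real.sqrt (2 * (d1 + d2)) ≤ d2 - d1)
    (hd : d = (d1 + d2) / 2)
    (ha : a = 1 + (d1 + d2) / 2) (hb : b = d1 * d2 / 4)
    (hy1 : 0 ≤ y1) (hy2 : 0 ≤ y2) (hy3 : 0 ≤ y3) (hsum : y1 + y2 + y3 = d)
    (hc1 : c1 = ((y1 + y3) ^ 2 + (y1 + y3)) + a * y1)
    (hc2 : c2 = a * y2 + ((y2 + y3) ^ 2 + (y2 + y3)))
    (hc3 : c3 = ((y1 + y3) ^ 2 + (y1 + y3)) + b + ((y2 + y3) ^ 2 + (y2 + y3)))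
    (heq1 : 0 < y1 → c1 ≤ c2 ∧ c1 ≤ c3)
    (heq2 : 0 < y2 → c2 ≤ c1 ∧ c2 ≤ c3)
    (heq3 : 0 < y3 → c3 ≤ c1 ∧ c3 ≤ c2) :
    1 / 12 ≤ y3 := by
  subst hc1 hc2 hc3
  have hE : Braess.IsEquilibrium a b d y1 y2 y3 := ⟨hy1, hy2, hy3, hsum, heq1, heq2, heq3⟩
  subst hd ha hb
  have hgap_sq : 2 * (d1 + d2) ≤ (d2 - d1) ^ 2 := (Real.sqrt_le_iff.1 hgap).2
  have h3 : 0 < y3 := hE.pos₃ (by linarith) (by linarith) <| by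
    unfold Braess.quadLatency
    nlinarith [sq_pos_of_pos (sub_pos.2 h12)]
  have hb : 0 ≤ d1 * d2 / 4 := by nlinarith
  have hquad := hE.sq_add_mul_add_eq_zero (by linarith)
    (hE.pos₁ hb h3) (hE.pos₂ hb h3) h3
  exact Braess.one_div_twelve_le (d := (d1 + d2) / 2) (by linarith) hy3 (by nlinarith)
end
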